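/- arXiv:2001.04793 — 5 statements merged into one kernel-verified Lean document; each statement's English description precedes it below -/
import Mathlib

section
/- Let p,q ≥ 1, λ > 0, A > 0, and let A_1,…,A_{p−1} > 0, B_1,…,B_{q−1} > 0, a_1,…,a_{p−1} > 0, b_1,…,b_{q−1} > 0 satisfy ∑_{m=1}^{q−1} B_m − ∑_{l=1}^{p−1} A_l > −1. Then for every z ∈ ℂ and every real t with |t| < 1, ∑_{k=0}^∞ (t^k/k!) ∑_{n=0}^∞ [Γ(λ+k+nA) ∏_{l=1}^{p−1} Γ(a_l+nA_l)] / [Γ(λ+nA) ∏_{m=1}^{q−1} Γ(b_m+nB_m)] · z^n/n! = (1−t)^{−λ} · ∑_{n=0}^∞ [∏_{l=1}^{p−1} Γ(a_l+nA_l) / ∏_{m=1}^{q−1} Γ(b_m+nB_m)] · (z/(1−t)^A)^n / n!. -/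
/-!
With `c n = λ + n A`, the ratio `Γ(c n + k) / Γ(c n)` is the Pochhammer symbol `(c n)_k`, so the
sum over `k` is the binomial series `(1 - t)^(-c n) = (1 - t)^(-λ) ((1 - t)^(-A))^n`. Exchanging the
two sums is legitimate because the same computation with `|t|` and `‖z‖` leaves a convergent
Fox–Wright series: log-convexity of `Γ` gives `Γ(x + s) / Γ(x) ≍ x^s`, so consecutive coefficients
have ratio `O(n^(∑ A - ∑ B))`, and `∑ B - ∑ A > -1` makes the ratio test apply.
-/

open Real Filter Topology Finset
open scoped Nat

namespace Real

theorem Gamma_add_nat_div_Gamma_eq {c : ℝ} (hc : 0 < c) (k : ℕ) :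
    Gamma (c + k) / Gamma c = (ascPochhammer ℝ k).eval c := by
  induction k with
  | zero => simp [(Gamma_pos_of_pos hc).ne']
  | succ k ih =>
    rw [Nat.cast_succ, ← add_assoc, Gamma_add_one (by positivity), ascPochhammer_succ_eval, ← ih]
    ring

theorem hasSum_ascPochhammer_eval_mul_pow_div_factorial (c : ℝ) {t : ℝ} (ht : |t| < 1) :
    HasSum (fun k : ℕ => (ascPochhammer ℝ k).eval c * t ^ k / k !) ((1 - t) ^ (-c)) := by
  have h := (one_div_one_sub_rpow_hasFPowerSeriesOnBall_zero c).hasSum (y := t)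
    (by simpa [edist_dist] using ht)
  simp only [FormalMultilinearSeries.ofScalars_apply_eq, zero_add, smul_eq_mul] at h
  rw [rpow_neg (by linarith [(abs_lt.mp ht).2]), ← one_div]
  refine h.congr_fun fun k => ?_
  rw [Ring.choose_eq_smul, Polynomial.descPochhammer_smeval_eq_ascPochhammer,
    Polynomial.ascPochhammer_smeval_eq_eval, show c + k - 1 - k + 1 = c by ring, smul_eq_mul]
  ring

theorem hasSum_pow_div_factorial_mul_Gamma_add_div_Gamma {c t : ℝ} (hc : 0 < c) (ht : |t| < 1) :
    HasSum (fun k : ℕ => t ^ k / k ! * (Gamma (c + k) / Gamma c)) ((1 - t) ^ (-c)) :=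
  (hasSum_ascPochhammer_eval_mul_pow_div_factorial c ht).congr_fun fun k => by
    rw [Gamma_add_nat_div_Gamma_eq hc]; ring

theorem rpow_neg_add_natCast_mul {x : ℝ} (hx : 0 < x) (l A : ℝ) (n : ℕ) :
    x ^ (-(l + n * A)) = x ^ (-l) / (x ^ A) ^ n := by
  rw [neg_add, rpow_add hx, div_eq_mul_inv, ← rpow_natCast, ← rpow_mul hx.le, ← rpow_neg hx.le,
    mul_comm A]

theorem log_Gamma_add_one_sub_log_Gamma {x : ℝ} (hx : 0 < x) :
    log (Gamma (x + 1)) - log (Gamma x) = log x := by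
  rw [Gamma_add_one hx.ne', log_mul hx.ne' (Gamma_pos_of_pos hx).ne', add_sub_cancel_right]

/- Both bounds compare slopes of the convex function `log ∘ Γ` with the slope `log y` on a unit
interval `[y, y + 1]`. -/
theorem Gamma_add_le_Gamma_mul_rpow {x s : ℝ} (hx : 0 < x) (hs : 0 < s) :
    Gamma (x + s) ≤ Gamma x * (x + s) ^ s := by
  have hxs : 0 < x + s := by linarith
  have hslope := convexOn_log_Gamma.slope_mono_adjacent (x := x) (y := x + s) (z := x + s + 1)
    hx (by simp only [Set.mem_Ioi]; linarith) (by linarith) (by linarith)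
  simp only [Function.comp_apply, add_sub_cancel_left, div_one,
    log_Gamma_add_one_sub_log_Gamma hxs, div_le_iff₀ hs] at hslope
  rw [← log_le_log_iff (Gamma_pos_of_pos hxs) (by positivity),
    log_mul (Gamma_pos_of_pos hx).ne' (rpow_pos_of_pos hxs s).ne', log_rpow hxs]
  linarith

theorem Gamma_add_one_mul_rpow_le {x s : ℝ} (hx : 0 < x) (hs : 0 < s) :
    Gamma (x + 1) * x ^ s ≤ Gamma (x + 1 + s) := by
  have hslope := convexOn_log_Gamma.slope_mono_adjacent (x := x) (y := x + 1) (z := x + 1 + s)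
    hx (by simp only [Set.mem_Ioi]; linarith) (by linarith) (by linarith)
  simp only [Function.comp_apply, add_sub_cancel_left, div_one,
    log_Gamma_add_one_sub_log_Gamma hx, le_div_iff₀ hs] at hslope
  have hΓ : 0 < Gamma (x + 1) := Gamma_pos_of_pos (by linarith)
  rw [← log_le_log_iff (mul_pos hΓ (rpow_pos_of_pos hx s)) (Gamma_pos_of_pos (by linarith)),
    log_mul hΓ.ne' (rpow_pos_of_pos hx s).ne', log_rpow hx]
  linarith

theorem Gamma_add_succ_mul_le {a α : ℝ} (ha : 0 < a) (hα : 0 < α) (n : ℕ) :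
    Gamma (a + (n + 1) * α) ≤ (a + α) ^ α * (n + 1) ^ α * Gamma (a + n * α) := by
  have hx : 0 < a + n * α := by positivity
  have hbound : a + (n + 1) * α ≤ (a + α) * (n + 1) := by nlinarith [n.cast_nonneg (α := ℝ)]
  calc Gamma (a + (n + 1) * α) = Gamma (a + n * α + α) := by ring_nf
    _ ≤ Gamma (a + n * α) * (a + (n + 1) * α) ^ α := by
      convert Gamma_add_le_Gamma_mul_rpow hx hα using 3; ring
    _ ≤ Gamma (a + n * α) * ((a + α) * (n + 1)) ^ α := by
      gcongr
    _ = (a + α) ^ α * (n + 1) ^ α * Gamma (a + n * α) := by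
      rw [mul_rpow (by positivity) (by positivity)]; ring

theorem le_Gamma_add_succ_mul {b β : ℝ} (hb : 0 < b) (hβ : 0 < β) (n : ℕ) :
    b / (b + β) * min b β ^ β * (n + 1) ^ β * Gamma (b + n * β) ≤ Gamma (b + (n + 1) * β) := by
  set y := b + n * β with hy
  have hy0 : 0 < y := by positivity
  have hyb : b ≤ y := le_add_of_nonneg_right (by positivity)
  have key := Gamma_add_one_mul_rpow_le hy0 hβ
  rw [Gamma_add_one hy0.ne', add_right_comm, Gamma_add_one (by positivity)] at key
  have hratio : b / (b + β) ≤ y / (y + β) := by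
    rw [div_le_div_iff₀ (by positivity) (by positivity)]; nlinarith
  have hpow : min b β ^ β * (n + 1) ^ β ≤ y ^ β := by
    rw [← mul_rpow (by positivity) (by positivity)]
    gcongr
    nlinarith [min_le_left b β, min_le_right b β, n.cast_nonneg (α := ℝ)]
  calc b / (b + β) * min b β ^ β * (n + 1) ^ β * Gamma y
      ≤ y / (y + β) * y ^ β * Gamma y := by
        rw [mul_assoc (b / (b + β))]
        gcongr
    _ = y * Gamma y * y ^ β / (y + β) := by ring
    _ ≤ Gamma (b + (n + 1) * β) := by
        rw [div_le_iff₀ (by positivity), show b + (n + 1) * β = y + β by ring]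
        linarith

end Real

/-- The coefficient of `z ^ n / n!` in `pΨq[(a i, α i); (b j, β j) | z]`. -/
noncomputable def foxWrightCoeff {ι κ : Type*} [Fintype ι] [Fintype κ]
    (a α : ι → ℝ) (b β : κ → ℝ) (n : ℕ) : ℝ :=
  (∏ i, Gamma (a i + n * α i)) / ∏ j, Gamma (b j + n * β j)

section foxWrightCoeff

variable {ι κ : Type*} [Fintype ι] [Fintype κ] {a α : ι → ℝ} {b β : κ → ℝ}

theorem foxWrightCoeff_pos (ha : ∀ i, 0 < a i) (hα : ∀ i, 0 < α i) (hb : ∀ j, 0 < b j)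
    (hβ : ∀ j, 0 < β j) (n : ℕ) : 0 < foxWrightCoeff a α b β n :=
  div_pos (prod_pos fun i _ => Gamma_pos_of_pos (by have := ha i; have := hα i; positivity))
    (prod_pos fun j _ => Gamma_pos_of_pos (by have := hb j; have := hβ j; positivity))

theorem foxWrightCoeff_succ_le (ha : ∀ i, 0 < a i) (hα : ∀ i, 0 < α i) (hb : ∀ j, 0 < b j)
    (hβ : ∀ j, 0 < β j) : ∃ K, ∀ n : ℕ,
      foxWrightCoeff a α b β (n + 1) ≤
        K * ((n : ℝ) + 1) ^ (∑ i, α i - ∑ j, β j) * foxWrightCoeff a α b β n := by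
  have hΓa (n : ℕ) (i : ι) : 0 < Gamma (a i + n * α i) :=
    Gamma_pos_of_pos (by have := ha i; have := hα i; positivity)
  have hΓb (n : ℕ) (j : κ) : 0 < Gamma (b j + n * β j) :=
    Gamma_pos_of_pos (by have := hb j; have := hβ j; positivity)
  have hκ : 0 < ∏ j, (b j / (b j + β j) * min (b j) (β j) ^ β j) :=
    prod_pos fun j _ => by have := hb j; have := hβ j; positivity
  refine ⟨(∏ i, (a i + α i) ^ α i) / ∏ j, (b j / (b j + β j) * min (b j) (β j) ^ β j),
    fun n => ?_⟩
  have hn : (0 : ℝ) < n + 1 := by positivity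
  have hnum : ∏ i, Gamma (a i + (n + 1) * α i) ≤
      (∏ i, (a i + α i) ^ α i) * (n + 1) ^ (∑ i, α i) * ∏ i, Gamma (a i + n * α i) := by
    rw [rpow_sum_of_pos hn, ← prod_mul_distrib, ← prod_mul_distrib]
    exact prod_le_prod (fun i _ => by simpa using (hΓa (n + 1) i).le)
      fun i _ => Gamma_add_succ_mul_le (ha i) (hα i) n
  have hden : (∏ j, (b j / (b j + β j) * min (b j) (β j) ^ β j)) * (n + 1) ^ (∑ j, β j) *
      ∏ j, Gamma (b j + n * β j) ≤ ∏ j, Gamma (b j + (n + 1) * β j) := by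
    rw [rpow_sum_of_pos hn, ← prod_mul_distrib, ← prod_mul_distrib]
    refine prod_le_prod (fun j _ => ?_) fun j _ => le_Gamma_add_succ_mul (hb j) (hβ j) n
    have := hb j; have := hβ j; have := hΓb n j
    positivity
  have hD := prod_pos fun j (_ : j ∈ univ) => hΓb n j
  unfold foxWrightCoeff
  push_cast
  calc (∏ i, Gamma (a i + (n + 1) * α i)) / ∏ j, Gamma (b j + (n + 1) * β j)
      ≤ (∏ i, (a i + α i) ^ α i) * (n + 1) ^ (∑ i, α i) * (∏ i, Gamma (a i + n * α i)) /
          ((∏ j, (b j / (b j + β j) * min (b j) (β j) ^ β j)) * (n + 1) ^ (∑ j, β j) *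
            ∏ j, Gamma (b j + n * β j)) :=
        div_le_div₀ ((prod_pos fun i _ => hΓa (n + 1) i).le.trans (by simpa using hnum)) hnum
          (by positivity) hden
    _ = _ := by rw [rpow_sub hn]; field_simp

theorem summable_foxWrightCoeff_mul_pow_div_factorial (ha : ∀ i, 0 < a i) (hα : ∀ i, 0 < α i)
    (hb : ∀ j, 0 < b j) (hβ : ∀ j, 0 < β j) (hconv : -1 < ∑ j, β j - ∑ i, α i) (s : ℝ) :
    Summable fun n : ℕ => foxWrightCoeff a α b β n * s ^ n / n ! := by
  obtain ⟨K, hK⟩ := foxWrightCoeff_succ_le ha hα hb hβ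
  set σ := ∑ i, α i - ∑ j, β j
  have hρ : Tendsto (fun n : ℕ => K * |s| * ((n : ℝ) + 1) ^ (σ - 1)) atTop (𝓝 0) := by
    have h := (tendsto_rpow_neg_atTop (by linarith : 0 < 1 - σ)).comp
      (tendsto_natCast_atTop_atTop.atTop_add (tendsto_const_nhds (x := (1 : ℝ))))
    simpa [Function.comp_def] using h.const_mul (K * |s|)
  have hnorm (n : ℕ) : ‖foxWrightCoeff a α b β n * s ^ n / (n ! : ℝ)‖ =
      foxWrightCoeff a α b β n * |s| ^ n / n ! := by
    rw [Real.norm_eq_abs, abs_div, abs_mul, abs_pow, abs_of_pos (foxWrightCoeff_pos ha hα hb hβ n),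
      Nat.abs_cast]
  refine summable_of_ratio_norm_eventually_le (r := 1 / 2) (by norm_num) ?_
  filter_upwards [hρ.eventually (ge_mem_nhds (by norm_num : (0 : ℝ) < 1 / 2))] with n hn
  have hn1 : (0 : ℝ) < n + 1 := by positivity
  rw [hnorm, hnorm]
  calc foxWrightCoeff a α b β (n + 1) * |s| ^ (n + 1) / (n + 1)!
      ≤ K * ((n : ℝ) + 1) ^ σ * foxWrightCoeff a α b β n * |s| ^ (n + 1) / (n + 1)! := by
        gcongr; exact hK n
    _ = K * |s| * ((n : ℝ) + 1) ^ (σ - 1) * (foxWrightCoeff a α b β n * |s| ^ n / n !) := by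
        rw [rpow_sub_one hn1.ne', Nat.factorial_succ]
        push_cast
        field_simp
        ring
    _ ≤ 1 / 2 * (foxWrightCoeff a α b β n * |s| ^ n / n !) := by
        gcongr
        have := foxWrightCoeff_pos ha hα hb hβ n; positivity

end foxWrightCoeff

theorem tsum_comm_of_hasSum_norm {β γ E : Type*} [NormedAddCommGroup E] [CompleteSpace E]
    {f : β → γ → E} {T : γ → ℝ} (hT : ∀ c, HasSum (fun b => ‖f b c‖) (T c)) (hTs : Summable T) :
    ∑' b, ∑' c, f b c = ∑' c, ∑' b, f b c := by
  have hnorm : Summable fun p : γ × β => ‖f p.2 p.1‖ :=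
    (summable_prod_of_nonneg fun _ => norm_nonneg _).2
      ⟨fun c => (hT c).summable, hTs.congr fun c => (hT c).tsum_eq.symm⟩
  exact (Summable.of_norm hnorm.prod_symm).tsum_comm.symm

theorem tsum_tsum_Gamma_add_div_Gamma_smul {E : Type*} [NormedAddCommGroup E] [NormedSpace ℝ E]
    [CompleteSpace E] {c : ℕ → ℝ} (hc : ∀ n, 0 < c n) {t : ℝ} (ht : |t| < 1) {w : ℕ → E}
    (hw : Summable fun n => (1 - |t|) ^ (-c n) * ‖w n‖) :
    ∑' k : ℕ, ∑' n, (t ^ k / k ! * (Gamma (c n + k) / Gamma (c n))) • w n =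
      ∑' n, (1 - t) ^ (-c n) • w n := by
  have hnorm (n : ℕ) : HasSum (fun k => ‖(t ^ k / k ! * (Gamma (c n + k) / Gamma (c n))) • w n‖)
      ((1 - |t|) ^ (-c n) * ‖w n‖) := by
    refine ((hasSum_pow_div_factorial_mul_Gamma_add_div_Gamma (hc n) (by rwa [abs_abs])).mul_right
      ‖w n‖).congr_fun fun k => ?_
    have hρ : 0 < Gamma (c n + k) / Gamma (c n) :=
      div_pos (Gamma_pos_of_pos (by linarith [hc n])) (Gamma_pos_of_pos (hc n))
    rw [norm_smul, Real.norm_eq_abs, abs_mul, abs_div, abs_pow, Nat.abs_cast, abs_of_pos hρ]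
  rw [tsum_comm_of_hasSum_norm hnorm hw]
  exact tsum_congr fun n =>
    ((hasSum_pow_div_factorial_mul_Gamma_add_div_Gamma (hc n) ht).smul_const (w n)).tsum_eq

theorem foxWright_generating_function_general
    (p q : ℕ)
    (lam A : ℝ) (hlam : 0 < lam) (hA : 0 < A)
    (a Aw : Fin (p - 1) → ℝ) (b Bw : Fin (q - 1) → ℝ)
    (ha : ∀ l, 0 < a l) (hAw : ∀ l, 0 < Aw l)
    (hb : ∀ m, 0 < b m) (hBw : ∀ m, 0 < Bw m)
    (hconv : (∑ m, Bw m) - (∑ l, Aw l) > -1)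
    (z : ℂ) (t : ℝ) (ht : |t| < 1) :
    ∑' k : ℕ, ((t ^ k / k.factorial : ℝ) : ℂ) *
      ∑' n : ℕ, (((Real.Gamma (lam + k + n * A) * ∏ l, Real.Gamma (a l + n * Aw l)) /
          (Real.Gamma (lam + n * A) * ∏ m, Real.Gamma (b m + n * Bw m)) : ℝ) : ℂ) *
        z ^ n / (n.factorial : ℂ)
    = (((1 - t) ^ (-lam) : ℝ) : ℂ) *
      ∑' n : ℕ, (((∏ l, Real.Gamma (a l + n * Aw l)) /
          (∏ m, Real.Gamma (b m + n * Bw m)) : ℝ) : ℂ) *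
        (z / (((1 - t) ^ A : ℝ) : ℂ)) ^ n / (n.factorial : ℂ) := by
  have h1t : 0 < 1 - |t| := by linarith
  set F := foxWrightCoeff a Aw b Bw
  have hF : ∀ n, 0 < F n := foxWrightCoeff_pos ha hAw hb hBw
  set w : ℕ → ℂ := fun n => (F n : ℂ) * z ^ n / (n ! : ℂ)
  have hw : Summable fun n : ℕ => (1 - |t|) ^ (-(lam + n * A)) * ‖w n‖ := by
    refine ((summable_foxWrightCoeff_mul_pow_div_factorial ha hAw hb hBw hconv
      (‖z‖ / (1 - |t|) ^ A)).mul_left ((1 - |t|) ^ (-lam))).congr fun n => ?_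
    rw [rpow_neg_add_natCast_mul h1t]
    simp only [w, norm_div, norm_mul, Complex.norm_real, norm_pow, Complex.norm_natCast,
      Real.norm_eq_abs, abs_of_pos (hF n)]
    ring
  calc _ = ∑' k : ℕ, ∑' n : ℕ,
        (t ^ k / k ! * (Gamma (lam + n * A + k) / Gamma (lam + n * A))) • w n := by
        refine tsum_congr fun k => ?_
        rw [← tsum_mul_left]
        refine tsum_congr fun n => ?_
        simp only [w, F, foxWrightCoeff, Complex.real_smul]
        rw [add_right_comm lam]
        push_cast
        ring
    _ = ∑' n : ℕ, (1 - t) ^ (-(lam + n * A)) • w n :=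
        tsum_tsum_Gamma_add_div_Gamma_smul (fun n => by positivity) ht hw
    _ = _ := by
        rw [← tsum_mul_left]
        refine tsum_congr fun n => ?_
        rw [Complex.real_smul, rpow_neg_add_natCast_mul (by linarith [le_abs_self t])]
        simp only [w, F, foxWrightCoeff]
        push_cast
        ring

/-- Generating function for the Fox–Wright function:
`∑_k pΨq[(λ+k,A),(a,A_l);(λ,A),(b,B_m) | z] t^k/k!
  = (1-t)^{-λ} (p-1)Ψ(q-1)[(a,A_l);(b,B_m) | z/(1-t)^A]`, written as explicit series. -/
theorem foxWright_generating_function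
    (p q : ℕ) (hp : 1 ≤ p) (hq : 1 ≤ q)
    (lam A : ℝ) (hlam : 0 < lam) (hA : 0 < A)
    (a Aw : Fin (p - 1) → ℝ) (b Bw : Fin (q - 1) → ℝ)
    (ha : ∀ l, 0 < a l) (hAw : ∀ l, 0 < Aw l)
    (hb : ∀ m, 0 < b m) (hBw : ∀ m, 0 < Bw m)
    (hconv : (∑ m, Bw m) - (∑ l, Aw l) > -1)
    (z : ℂ) (t : ℝ) (ht : |t| < 1) :
    ∑' k : ℕ, ((t ^ k / k.factorial : ℝ) : ℂ) *
      ∑' n : ℕ, (((Real.Gamma (lam + k + n * A) * ∏ l, Real.Gamma (a l + n * Aw l)) /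
          (Real.Gamma (lam + n * A) * ∏ m, Real.Gamma (b m + n * Bw m)) : ℝ) : ℂ) *
        z ^ n / (n.factorial : ℂ)
    = (((1 - t) ^ (-lam) : ℝ) : ℂ) *
      ∑' n : ℕ, (((∏ l, Real.Gamma (a l + n * Aw l)) /
          (∏ m, Real.Gamma (b m + n * Bw m)) : ℝ) : ℂ) *
        (z / (((1 - t) ^ A : ℝ) : ℂ)) ^ n / (n.factorial : ℂ) :=
  foxWright_generating_function_general p q lam A hlam hA a Aw b Bw ha hAw hb hBw hconv z t ht
end

section
/- Let λ > 0 and A > 0. Then for every z ∈ ℂ and every real t with |t| < 1, ∑_{k=0}^∞ (t^k/k!) ∑_{n=0}^∞ [Γ(λ+k+nA)/Γ(λ+nA)] · z^n/n! = (1−t)^{−λ} · exp(z/(1−t)^A). -/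
/-!
Since `Γ(r + k) / Γ(r)` is the rising factorial `(r)ₖ`, summing over `k` first gives the
binomial series `∑ₖ (r)ₖ tᵏ / k! = (1 - t)^(-r)` with `r = λ + nA`, and the remaining sum over
`n` of `(1 - t)^(-λ) (z (1 - t)^(-A))ⁿ / n!` is an exponential series. The two summations may be
interchanged because the series of absolute values is the same double series at `|t|` and `|z|`,
which converges by the same computation.
-/

open scoped Nat

theorem Real.Gamma_add_nat_div_Gamma_eq_s1 {r : ℝ} (hr : 0 < r) (n : ℕ) :
    Real.Gamma (r + n) / Real.Gamma r = (ascPochhammer ℝ n).eval r := by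
  induction n with
  | zero => simp [(Real.Gamma_pos_of_pos hr).ne']
  | succ n ih =>
    rw [ascPochhammer_succ_eval, ← ih, Nat.cast_succ, ← add_assoc,
      Real.Gamma_add_one (by positivity)]
    ring

theorem Real.ringChoose_add_nat_sub_one_eq_Gamma {r : ℝ} (hr : 0 < r) (n : ℕ) :
    Ring.choose (r + n - 1) n = Real.Gamma (r + n) / Real.Gamma r / n ! := by
  rw [Ring.choose_eq_smul, Polynomial.descPochhammer_smeval_eq_ascPochhammer,
    Polynomial.ascPochhammer_smeval_eq_eval, show r + n - 1 - n + 1 = r by ring,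
    Real.Gamma_add_nat_div_Gamma_eq_s1 hr, smul_eq_mul, inv_mul_eq_div]

theorem Real.hasSum_Gamma_add_nat_div_Gamma_mul_pow {r t : ℝ} (hr : 0 < r) (ht : |t| < 1) :
    HasSum (fun k : ℕ => Real.Gamma (r + k) / Real.Gamma r / k ! * t ^ k) ((1 - t) ^ (-r)) := by
  have ht' : t ∈ Metric.eball (0 : ℝ) 1 := by simpa [Metric.mem_eball, edist_dist] using ht
  have h := (Real.one_div_one_sub_rpow_hasFPowerSeriesOnBall_zero r).hasSum ht'
  simp only [FormalMultilinearSeries.ofScalars_apply_eq, zero_add, smul_eq_mul,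
    Real.ringChoose_add_nat_sub_one_eq_Gamma hr] at h
  rwa [Real.rpow_neg (by linarith [abs_lt.1 ht]), ← one_div]

theorem Real.rpow_neg_add_nat_mul {u : ℝ} (hu : 0 < u) (lam A : ℝ) (n : ℕ) :
    u ^ (-(lam + n * A)) = u ^ (-lam) * (u ^ (-A)) ^ n := by
  rw [show -(lam + n * A) = -lam + -A * n by ring, Real.rpow_add hu, Real.rpow_mul hu.le,
    Real.rpow_natCast]

theorem summable_uncurry_of_hasSum_norm {E : Type*} [NormedAddCommGroup E] [CompleteSpace E]
    {f : ℕ → ℕ → E} {g : ℕ → ℝ} (hf : ∀ n, HasSum (fun k => ‖f k n‖) (g n)) (hg : Summable g) :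
    Summable (Function.uncurry f) := by
  have hswap : Summable fun p : ℕ × ℕ => ‖f p.2 p.1‖ :=
    (summable_prod_of_nonneg fun _ => norm_nonneg _).2
      ⟨fun n => (hf n).summable, hg.congr fun n => (hf n).tsum_eq.symm⟩
  exact .of_norm ((Equiv.prodComm ℕ ℕ).summable_iff.1 hswap)

section

variable {𝕜 : Type*} [RCLike 𝕜]

theorem hasSum_rpow_neg_add_nat_mul_mul_pow_div_factorial {u : ℝ} (hu : 0 < u) (lam A : ℝ)
    (w : 𝕜) :
    HasSum (fun n : ℕ => ((u ^ (-(lam + n * A)) : ℝ) : 𝕜) * (w ^ n / n !))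
      ((u ^ (-lam) : ℝ) * NormedSpace.exp (w * (u ^ (-A) : ℝ))) := by
  refine ((NormedSpace.expSeries_div_hasSum_exp (w * (u ^ (-A) : ℝ))).mul_left _).congr_fun
    fun n => ?_
  rw [Real.rpow_neg_add_nat_mul hu]
  push_cast
  ring

/-- `t ^ k / k!` times the `n`-th term of `1Ψ1[(λ + k, A); (λ, A) | z]`. -/
noncomputable def foxWrightGenTerm (lam A t : ℝ) (z : 𝕜) (k n : ℕ) : 𝕜 :=
  ((t ^ k / k ! : ℝ) : 𝕜) *
    (((Real.Gamma (lam + k + n * A) / Real.Gamma (lam + n * A) : ℝ) : 𝕜) * z ^ n / n !)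

theorem foxWrightGenTerm_eq (lam A t : ℝ) (z : 𝕜) (k n : ℕ) :
    foxWrightGenTerm lam A t z k n =
      ((Real.Gamma (lam + n * A + k) / Real.Gamma (lam + n * A) / k ! * t ^ k : ℝ) : 𝕜) *
        (z ^ n / n !) := by
  rw [foxWrightGenTerm, add_right_comm]
  push_cast
  ring

variable {lam A : ℝ}

theorem norm_foxWrightGenTerm (hlam : 0 < lam) (hA : 0 ≤ A) (t : ℝ) (z : 𝕜) (k n : ℕ) :
    ‖foxWrightGenTerm lam A t z k n‖ = foxWrightGenTerm lam A |t| ‖z‖ k n := by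
  have hr : 0 < lam + n * A := by positivity
  simp only [foxWrightGenTerm_eq, norm_mul, norm_div, norm_pow, RCLike.norm_ofReal,
    RCLike.norm_natCast, abs_mul, abs_div, abs_pow, Nat.abs_cast]
  rw [abs_of_pos (Real.Gamma_pos_of_pos (by positivity)), abs_of_pos (Real.Gamma_pos_of_pos hr)]
  rfl

theorem hasSum_foxWrightGenTerm_left (hlam : 0 < lam) (hA : 0 ≤ A) {t : ℝ} (ht : |t| < 1)
    (z : 𝕜) (n : ℕ) :
    HasSum (fun k => foxWrightGenTerm lam A t z k n)
      (((1 - t) ^ (-(lam + n * A)) : ℝ) * (z ^ n / n !)) := by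
  simp only [foxWrightGenTerm_eq]
  exact ((RCLike.hasSum_ofReal 𝕜).2
    (Real.hasSum_Gamma_add_nat_div_Gamma_mul_pow (by positivity) ht)).mul_right _

theorem summable_uncurry_foxWrightGenTerm (hlam : 0 < lam) (hA : 0 ≤ A) {t : ℝ} (ht : |t| < 1)
    (z : 𝕜) : Summable (Function.uncurry (foxWrightGenTerm lam A t z)) := by
  refine summable_uncurry_of_hasSum_norm (fun n => ?_)
    (hasSum_rpow_neg_add_nat_mul_mul_pow_div_factorial (sub_pos.2 ht) lam A ‖z‖).summable
  simp only [norm_foxWrightGenTerm hlam hA]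
  exact hasSum_foxWrightGenTerm_left hlam hA (by rwa [abs_abs]) ‖z‖ n

end

/-- `∑_k 1Ψ1[(λ+k,A);(λ,A) | z] t^k/k! = (1-t)^{-λ} exp(z/(1-t)^A)`, written as explicit series. -/
theorem foxWright_generating_function_one_one
    (lam A : ℝ) (hlam : 0 < lam) (hA : 0 < A)
    (z : ℂ) (t : ℝ) (ht : |t| < 1) :
    ∑' k : ℕ, ((t ^ k / k.factorial : ℝ) : ℂ) *
      ∑' n : ℕ, ((Real.Gamma (lam + k + n * A) / Real.Gamma (lam + n * A) : ℝ) : ℂ) *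
        z ^ n / (n.factorial : ℂ)
    = (((1 - t) ^ (-lam) : ℝ) : ℂ) * Complex.exp (z / (((1 - t) ^ A : ℝ) : ℂ)) := by
  have ht1 : 0 < 1 - t := by linarith [abs_lt.1 ht]
  have hsum := summable_uncurry_foxWrightGenTerm hlam hA.le ht z
  calc _ = ∑' k, ∑' n, foxWrightGenTerm lam A t z k n := tsum_congr fun k => tsum_mul_left.symm
    _ = ∑' n, ∑' k, foxWrightGenTerm lam A t z k n :=
      (hsum.tsum_comm' (fun k => hsum.prod_factor k) fun n => hsum.prod_symm.prod_factor n).symm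
    _ = ∑' n : ℕ, (((1 - t) ^ (-(lam + n * A)) : ℝ) : ℂ) * (z ^ n / n !) :=
      tsum_congr fun n => (hasSum_foxWrightGenTerm_left hlam hA.le ht z n).tsum_eq
    _ = (((1 - t) ^ (-lam) : ℝ) : ℂ) * NormedSpace.exp (z * (((1 - t) ^ (-A) : ℝ) : ℂ)) :=
      (hasSum_rpow_neg_add_nat_mul_mul_pow_div_factorial ht1 lam A z).tsum_eq
    _ = _ := by
      rw [← Complex.exp_eq_exp_ℂ, Real.rpow_neg ht1.le A, Complex.ofReal_inv, div_eq_mul_inv]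
end

section
/- Let λ > 0. Then for every z ∈ ℂ and every real t with |t| < 1, ∑_{k=0}^∞ Γ(λ+k) · ₁F₁(λ+k; λ; z) · t^k/k! = Γ(λ) · (1−t)^{−λ} · exp(z/(1−t)), where ₁F₁(a;b;z) = ∑_{n=0}^∞ ((a)_n/(b)_n) z^n/n! is Kummer's confluent hypergeometric function and (τ)_n = Γ(τ+n)/Γ(τ) is the Pochhammer symbol. -/
/-!
Since `Γ(λ+k) (λ+k)_n / (λ)_n = Γ(λ) (λ+n)_k`, the left-hand side is
`Γ(λ) ∑_k ∑_n (λ+n)_k t^k/k! z^n/n!`. This double series converges absolutely, so the order of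
summation may be swapped, and the binomial series `∑_k (λ+n)_k t^k/k! = (1-t)^(-λ-n)` leaves
`Γ(λ) (1-t)^(-λ) ∑_n (z/(1-t))^n/n!`.
-/

open scoped Nat

theorem Real.Gamma_add_nat_div_Gamma_eq_s2 {μ : ℝ} (hμ : ∀ j : ℕ, μ ≠ -j) (k : ℕ) :
    Real.Gamma (μ + k) / Real.Gamma μ = (ascPochhammer ℝ k).eval μ := by
  induction k with
  | zero => simp [Real.Gamma_ne_zero hμ]
  | succ k ih =>
    have hk : μ + k ≠ 0 := fun h => hμ k (by linarith)
    rw [ascPochhammer_succ_eval, ← ih, Nat.cast_succ, ← add_assoc, Real.Gamma_add_one hk]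
    ring

theorem hasSum_ascPochhammer_mul_pow_div_factorial (μ : ℝ) {t : ℝ} (ht : |t| < 1) :
    HasSum (fun k : ℕ => (ascPochhammer ℝ k).eval μ * t ^ k / k !) ((1 - t) ^ (-μ)) := by
  have h := (Real.one_div_one_sub_rpow_hasFPowerSeriesOnBall_zero μ).hasSum (y := t)
    (by simpa [enorm_eq_nnnorm, ← NNReal.coe_lt_coe] using ht)
  have hchoose (k : ℕ) : Ring.choose (μ + k - 1) k = (ascPochhammer ℝ k).eval μ / k ! := by
    rw [← Ring.multichoose_eq, eq_div_iff (by positivity), mul_comm, ← nsmul_eq_mul,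
      Ring.factorial_nsmul_multichoose_eq_ascPochhammer,
      Polynomial.ascPochhammer_smeval_eq_eval]
  simp only [FormalMultilinearSeries.ofScalars_apply_eq, hchoose, smul_eq_mul, zero_add, one_div,
    ← Real.rpow_neg (by linarith [le_abs_self t] : 0 ≤ 1 - t)] at h
  simpa only [div_mul_eq_mul_div] using h

section RCLike

variable {𝕜 : Type*} [RCLike 𝕜]

theorem hasSum_ascPochhammer_nat_add_mul_pow (μ : ℝ) {t : ℝ} (ht : |t| < 1) (z : 𝕜) (n : ℕ) :
    HasSum
      (fun k : ℕ => (((ascPochhammer ℝ k).eval (μ + n) * t ^ k / k ! : ℝ) : 𝕜) * (z ^ n / n !))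
      (((1 - t) ^ (-μ) : ℝ) * ((z / ((1 - t : ℝ) : 𝕜)) ^ n / n !)) := by
  have h1t : 0 < 1 - t := by linarith [le_abs_self t]
  have hsum : (((1 - t) ^ (-(μ + n)) : ℝ) : 𝕜) * (z ^ n / n !)
      = ((1 - t) ^ (-μ) : ℝ) * ((z / ((1 - t : ℝ) : 𝕜)) ^ n / n !) := by
    rw [neg_add, Real.rpow_add h1t, Real.rpow_neg h1t.le n, Real.rpow_natCast]
    have : ((1 - t : ℝ) : 𝕜) ≠ 0 := RCLike.ofReal_ne_zero.mpr h1t.ne'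
    push_cast at this ⊢
    rw [div_pow]
    field_simp
  exact hsum ▸ ((RCLike.hasSum_ofReal 𝕜).mpr
    (hasSum_ascPochhammer_mul_pow_div_factorial (μ + n) ht)).mul_right (z ^ n / n !)

theorem tsum_tsum_ascPochhammer_nat_add_mul_pow {μ t : ℝ} (hμ : 0 < μ) (ht : |t| < 1) (z : 𝕜) :
    ∑' k : ℕ, ∑' n : ℕ, (((ascPochhammer ℝ k).eval (μ + n) * t ^ k / k ! : ℝ) : 𝕜) * (z ^ n / n !)
      = ((1 - t) ^ (-μ) : ℝ) * NormedSpace.exp (z / ((1 - t : ℝ) : 𝕜)) := by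
  have hnorm (n k : ℕ) :
      ‖(((ascPochhammer ℝ k).eval (μ + n) * t ^ k / k ! : ℝ) : 𝕜) * (z ^ n / n !)‖
        = (ascPochhammer ℝ k).eval (μ + n) * |t| ^ k / k ! * (‖z‖ ^ n / n !) := by
    rw [norm_mul, RCLike.norm_ofReal, norm_div, norm_pow, RCLike.norm_natCast, abs_div, abs_mul,
      abs_pow, abs_of_pos (ascPochhammer_pos _ _ (by positivity)), Nat.abs_cast]
  -- The norms form the same double series at `|t|` and `‖z‖`, whose row sums are known.
  have hnorm_row (n : ℕ) :=
    hasSum_ascPochhammer_nat_add_mul_pow μ (t := |t|) (by rwa [abs_abs]) ‖z‖ n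
  simp only [RCLike.ofReal_real_eq_id, id] at hnorm_row
  have hsummable : Summable (Function.uncurry fun n k : ℕ =>
      (((ascPochhammer ℝ k).eval (μ + n) * t ^ k / k ! : ℝ) : 𝕜) * (z ^ n / n !)) := by
    refine Summable.of_norm ((summable_prod_of_nonneg fun _ => norm_nonneg _).mpr ⟨?_, ?_⟩)
    · simpa only [Function.uncurry_apply_pair, hnorm] using fun n => (hnorm_row n).summable
    · simp only [Function.uncurry_apply_pair, hnorm, fun n : ℕ => (hnorm_row n).tsum_eq]
      exact (Real.summable_pow_div_factorial _).mul_left _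
  rw [hsummable.tsum_comm,
    tsum_congr fun n => (hasSum_ascPochhammer_nat_add_mul_pow μ ht z n).tsum_eq,
    tsum_mul_left, (NormedSpace.expSeries_div_hasSum_exp _).tsum_eq]

end RCLike

/-- `∑_k Γ(λ+k) ₁F₁(λ+k;λ;z) t^k/k! = Γ(λ)(1-t)^{-λ} exp(z/(1-t))`,
where `₁F₁(a;b;z) = ∑_n ((a)_n/(b)_n) z^n/n!` and `(τ)_n = Γ(τ+n)/Γ(τ)`. -/
theorem kummer_generating_function
    (lam : ℝ) (hlam : 0 < lam)
    (z : ℂ) (t : ℝ) (ht : |t| < 1) :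
    ∑' k : ℕ, (Real.Gamma (lam + k) : ℂ) *
      (∑' n : ℕ, (((Real.Gamma (lam + k + n) / Real.Gamma (lam + k)) /
          (Real.Gamma (lam + n) / Real.Gamma lam) : ℝ) : ℂ) * z ^ n / (n.factorial : ℂ)) *
      ((t ^ k / k.factorial : ℝ) : ℂ)
    = (Real.Gamma lam : ℂ) * (((1 - t) ^ (-lam) : ℝ) : ℂ) *
      Complex.exp (z / ((1 - t : ℝ) : ℂ)) := by
  have hpos (n : ℕ) : ∀ j : ℕ, lam + n ≠ -j := fun j =>
    ((neg_nonpos.2 j.cast_nonneg).trans_lt (by positivity)).ne'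
  have hcoeff (k n : ℕ) :
      Real.Gamma (lam + k) * ((Real.Gamma (lam + k + n) / Real.Gamma (lam + k)) /
        (Real.Gamma (lam + n) / Real.Gamma lam))
      = Real.Gamma lam * (ascPochhammer ℝ k).eval (lam + n) := by
    rw [← Real.Gamma_add_nat_div_Gamma_eq_s2 (hpos n), add_right_comm]
    have := Real.Gamma_ne_zero (hpos k)
    have := Real.Gamma_ne_zero (hpos n)
    have := Real.Gamma_ne_zero (hpos 0)
    field_simp
  calc _ = ∑' k : ℕ, (Real.Gamma lam : ℂ) * ∑' n : ℕ,
        (((ascPochhammer ℝ k).eval (lam + n) * t ^ k / k ! : ℝ) : ℂ) * (z ^ n / n !) := by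
        refine tsum_congr fun k => ?_
        rw [← tsum_mul_left, ← tsum_mul_right, ← tsum_mul_left]
        refine tsum_congr fun n => ?_
        have := congrArg (fun x : ℝ => (x : ℂ)) (hcoeff k n)
        push_cast at this ⊢
        linear_combination (t ^ k / k ! * z ^ n / n !) * this
    _ = _ := by
      rw [tsum_mul_left, ← RCLike.ofReal_eq_complex_ofReal,
        tsum_tsum_ascPochhammer_nat_add_mul_pow hlam ht, Complex.exp_eq_exp_ℂ]
      ring
end

section
/- Let p, q be positive integers with p ≤ q, and let a_1,…,a_p > 0 and b_1,…,b_q > 0. Then for every z ∈ ℂ and every real t with |t| < 1, ∑_{k=0}^∞ Γ(a_1+k) · pFq(a_1+k, a_2,…,a_p; a_1, b_2,…,b_q; z) · t^k/k! = Γ(a_1) · (1−t)^{−a_1} · (p−1)F(q−1)(a_2,…,a_p; b_2,…,b_q; z/(1−t)). -/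
/-!
Expand each inner series and swap the two summations; absolute convergence holds because for
`p ≤ q` consecutive coefficients of the `(p-1)F(q-1)` series have bounded ratio. Since
`Γ(a₁+k) (a₁+k)ₙ / (a₁)ₙ = Γ(a₁+n+k) Γ(a₁) / Γ(a₁+n)`, the sum over `k` for fixed `n` is the
binomial series `∑ₖ Γ(s+k) tᵏ / k! = Γ(s) (1-t)^(-s)` with `s = a₁ + n`, which contributes the
factor `(1-t)^(-a₁) (1-t)^(-n)`. The binomial series itself comes from integrating the exponential
series of `e^(tx)` against the Euler integral `Γ(s) (1-t)^(-s) = ∫₀^∞ x^(s-1) e^(-(1-t)x) dx`.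
-/

open Real Filter MeasureTheory Set
open scoped Nat

theorem tsum_comm_of_summable_norm {β γ E : Type*} [NormedAddCommGroup E] [CompleteSpace E]
    {f : β → γ → E} (hrow : ∀ b, Summable fun c => ‖f b c‖)
    (hsum : Summable fun b => ∑' c, ‖f b c‖) :
    ∑' c, ∑' b, f b c = ∑' b, ∑' c, f b c :=
  Summable.tsum_comm <| Summable.of_norm (f := Function.uncurry f) <|
    (summable_prod_of_nonneg fun _ => norm_nonneg _).2 ⟨hrow, hsum⟩

theorem Real.hasSum_Gamma_add_mul_pow_div_factorial {s t : ℝ} (hs : 0 < s) (ht : |t| < 1) :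
    HasSum (fun k : ℕ => Gamma (s + k) * t ^ k / k !) (Gamma s * (1 - t) ^ (-s)) := by
  let F : ℝ → ℕ → ℝ → ℝ := fun u k x => x ^ (s - 1) * exp (-x) * ((u * x) ^ k / k !)
  have hF_sum (u x : ℝ) : HasSum (fun k => F u k x) (x ^ (s - 1) * exp (-((1 - u) * x))) := by
    have := (NormedSpace.expSeries_div_hasSum_exp (u * x)).mul_left (x ^ (s - 1) * exp (-x))
    rwa [← Real.exp_eq_exp_ℝ, mul_assoc, ← Real.exp_add, show -x + u * x = -((1 - u) * x) by ring]
      at this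
  have hF_int (u : ℝ) (k : ℕ) : ∫ x in Ioi 0, F u k x = Gamma (s + k) * u ^ k / k ! := by
    rw [Gamma_eq_integral (by positivity), mul_div_assoc, ← integral_mul_const]
    refine setIntegral_congr_fun measurableSet_Ioi fun x (hx : 0 < x) => ?_
    simp only [F, mul_pow, show s + k - 1 = (s - 1) + k by ring, rpow_add hx, rpow_natCast]
    ring
  have hsum_int {u : ℝ} (hu : |u| < 1) :
      ∫ x in Ioi 0, x ^ (s - 1) * exp (-((1 - u) * x)) = Gamma s * (1 - u) ^ (-s) := by
    have hu1 : 0 < 1 - u := by linarith [(abs_lt.1 hu).2]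
    rw [integral_rpow_mul_exp_neg_mul_Ioi hs hu1, one_div, inv_rpow hu1.le, rpow_neg hu1.le,
      mul_comm]
  have hbound_int : Integrable (fun x => ∑' k, F |t| k x) (volume.restrict (Ioi 0)) := by
    refine Integrable.of_integral_ne_zero ?_
    simp_rw [(hF_sum _ _).tsum_eq, hsum_int (by rwa [abs_abs])]
    have : 0 < 1 - |t| := by linarith
    positivity
  have := hasSum_integral_of_dominated_convergence (F |t|) (fun k => ?_) (fun k => ?_)
    (ae_of_all _ fun x => (hF_sum |t| x).summable) hbound_int (ae_of_all _ (hF_sum t))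
  · simpa only [hF_int, hsum_int ht] using this
  · exact (by fun_prop : Measurable (F t k)).aestronglyMeasurable
  · refine (ae_restrict_iff' measurableSet_Ioi).2 (ae_of_all _ fun x (hx : 0 < x) => ?_)
    simp [F, abs_of_pos hx, abs_of_nonneg (rpow_nonneg hx.le _)]

theorem Real.hasSum_Gamma_add_nat_add_mul_pow_div_factorial {s t : ℝ} (hs : 0 < s) (ht : |t| < 1)
    (n : ℕ) :
    HasSum (fun k : ℕ => Gamma (s + n + k) * t ^ k / k ! * (Gamma s / Gamma (s + n)))
      (Gamma s * (1 - t) ^ (-s) / (1 - t) ^ n) := by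
  have h1t : 0 < 1 - t := by linarith [(abs_lt.1 ht).2]
  have : Gamma (s + n) ≠ 0 := by positivity
  have hsum : Gamma s * (1 - t) ^ (-s) / (1 - t) ^ n =
      Gamma (s + n) * (1 - t) ^ (-(s + n)) * (Gamma s / Gamma (s + n)) := by
    rw [neg_add, rpow_add h1t, rpow_neg h1t.le (n : ℝ), rpow_natCast]
    field_simp
  rw [hsum]
  exact (hasSum_Gamma_add_mul_pow_div_factorial (by positivity) ht).mul_right _

theorem tsum_Gamma_add_mul_tsum_pochhammer_div_pochhammer {s t : ℝ} (hs : 0 < s) (ht : |t| < 1)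
    (A : ℕ → ℂ) (z : ℂ) (hA : Summable fun n : ℕ => ‖A n‖ * (‖z‖ / (1 - |t|)) ^ n / n !) :
    ∑' k : ℕ, (Gamma (s + k) : ℂ) *
      (∑' n : ℕ, (((Gamma (s + k + n) / Gamma (s + k)) / (Gamma (s + n) / Gamma s) : ℝ) : ℂ) *
        A n * z ^ n / n !) * ((t ^ k / k ! : ℝ) : ℂ)
    = (Gamma s : ℂ) * (((1 - t) ^ (-s) : ℝ) : ℂ) *
      ∑' n : ℕ, A n * (z / ((1 - t : ℝ) : ℂ)) ^ n / n ! := by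
  have h1t : 0 < 1 - |t| := by linarith
  let w : ℝ → ℕ → ℕ → ℝ := fun u n k =>
    Gamma (s + n + k) * u ^ k / k ! * (Gamma s / Gamma (s + n))
  let F : ℕ → ℕ → ℂ := fun n k => (w t n k : ℂ) * (A n * z ^ n / n !)
  have hterm (k n : ℕ) : (Gamma (s + k) : ℂ) *
      ((((Gamma (s + k + n) / Gamma (s + k)) / (Gamma (s + n) / Gamma s) : ℝ) : ℂ) *
        A n * z ^ n / n !) * ((t ^ k / k ! : ℝ) : ℂ) = F n k := by
    have : Gamma (s + k) ≠ 0 := by positivity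
    -- `Γ(s+k) (s+k)ₙ / (s)ₙ = Γ(s+n+k) Γ(s) / Γ(s+n)` decouples `k` from `n`.
    have hw : Gamma (s + k) * ((Gamma (s + k + n) / Gamma (s + k)) / (Gamma (s + n) / Gamma s)) *
        (t ^ k / k !) = w t n k := by
      simp only [w, add_right_comm s (k : ℝ)]
      field_simp
    simp only [F, ← hw]
    push_cast
    ring
  have hnorm (n k : ℕ) : ‖F n k‖ = w |t| n k * (‖A n‖ * ‖z‖ ^ n / n !) := by
    simp [F, w, abs_of_pos (Gamma_pos_of_pos (by positivity : 0 < s + n + k)),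
      abs_of_pos (Gamma_pos_of_pos hs), abs_of_pos (Gamma_pos_of_pos (by positivity : 0 < s + n))]
  have hrow (n : ℕ) := (hasSum_Gamma_add_nat_add_mul_pow_div_factorial hs
    (by rwa [abs_abs] : |(|t|)| < 1) n).mul_right (‖A n‖ * ‖z‖ ^ n / n !)
  have hsum : Summable fun n => ∑' k, ‖F n k‖ := by
    refine (hA.mul_left (Gamma s * (1 - |t|) ^ (-s))).congr fun n => ?_
    rw [tsum_congr (hnorm n), (hrow n).tsum_eq, div_pow]
    field_simp
  calc _ = ∑' k, ∑' n, F n k := tsum_congr fun k => by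
          rw [← tsum_mul_left, ← tsum_mul_right]
          exact tsum_congr (hterm k)
    _ = ∑' n, ∑' k, F n k := tsum_comm_of_summable_norm
          (fun n => ((hrow n).congr_fun (hnorm n)).summable) hsum
    _ = _ := by
          rw [← tsum_mul_left]
          refine tsum_congr fun n => ?_
          rw [tsum_mul_right, ← Complex.ofReal_tsum,
            (hasSum_Gamma_add_nat_add_mul_pow_div_factorial hs ht n).tsum_eq]
          push_cast
          rw [div_pow]
          ring

noncomputable def hypergeometricCoeff {ι κ : Type*} [Fintype ι] [Fintype κ] (a : ι → ℝ)
    (b : κ → ℝ) (n : ℕ) : ℝ :=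
  (∏ l, Gamma (a l + n) / Gamma (a l)) / ∏ m, Gamma (b m + n) / Gamma (b m)

section Hypergeometric

variable {ι κ : Type*} [Fintype ι] [Fintype κ] {a : ι → ℝ} {b : κ → ℝ}

theorem hypergeometricCoeff_pos (ha : ∀ l, 0 < a l) (hb : ∀ m, 0 < b m) (n : ℕ) :
    0 < hypergeometricCoeff a b n := by
  unfold hypergeometricCoeff
  refine div_pos (Finset.prod_pos fun l _ => ?_) (Finset.prod_pos fun m _ => ?_)
  · have := ha l; positivity
  · have := hb m; positivity

theorem hypergeometricCoeff_succ (ha : ∀ l, 0 < a l) (hb : ∀ m, 0 < b m) (n : ℕ) :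
    hypergeometricCoeff a b (n + 1) =
      hypergeometricCoeff a b n * ((∏ l, (a l + n)) / ∏ m, (b m + n)) := by
  have hΓ {c : ℝ} (hc : 0 < c) :
      Gamma (c + ↑(n + 1)) / Gamma c = (c + n) * (Gamma (c + n) / Gamma c) := by
    rw [Nat.cast_succ, ← add_assoc, Gamma_add_one (by positivity), mul_div_assoc]
  simp only [hypergeometricCoeff, hΓ (ha _), hΓ (hb _), Finset.prod_mul_distrib]
  ring

theorem prod_add_div_prod_add_le (hcard : Fintype.card ι ≤ Fintype.card κ)
    (ha : ∀ l, 0 ≤ a l) (hb : ∀ m, 0 ≤ b m) {x : ℝ} (hx : 1 ≤ x) :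
    (∏ l, (a l + x)) / ∏ m, (b m + x) ≤ ∏ l, (a l + 1) := by
  have hden : x ^ Fintype.card κ ≤ ∏ m, (b m + x) := by
    rw [← Finset.card_univ, ← Finset.prod_const]
    exact Finset.prod_le_prod (fun _ _ => by positivity) fun m _ => le_add_of_nonneg_left (hb m)
  rw [div_le_iff₀ (Finset.prod_pos fun m _ => by linarith [hb m])]
  calc ∏ l, (a l + x) ≤ ∏ l, ((a l + 1) * x) :=
        Finset.prod_le_prod (fun l _ => by have := ha l; positivity)
          fun l _ => by nlinarith [ha l]
    _ = (∏ l, (a l + 1)) * x ^ Fintype.card ι := by simp [Finset.prod_mul_distrib]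
    _ ≤ (∏ l, (a l + 1)) * ∏ m, (b m + x) := by
        gcongr
        · exact Finset.prod_nonneg fun l _ => by have := ha l; positivity
        · exact (pow_le_pow_right₀ hx hcard).trans hden

theorem summable_hypergeometricCoeff_mul_pow_div_factorial
    (hcard : Fintype.card ι ≤ Fintype.card κ) (ha : ∀ l, 0 < a l) (hb : ∀ m, 0 < b m) (r : ℝ) :
    Summable fun n : ℕ => hypergeometricCoeff a b n * r ^ n / n ! := by
  set K := ∏ l, (a l + 1)
  refine summable_of_ratio_norm_eventually_le one_half_lt_one ?_
  filter_upwards [eventually_ge_atTop (max 1 ⌈2 * K * |r|⌉₊)] with n hn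
  have hn1 : (1 : ℝ) ≤ n := by exact_mod_cast le_of_max_le_left hn
  have hnK : 2 * K * |r| ≤ n := Nat.ceil_le.1 (le_of_max_le_right hn)
  have hstep : hypergeometricCoeff a b (n + 1) * r ^ (n + 1) / (n + 1)! =
      (∏ l, (a l + n)) / (∏ m, (b m + n)) * r / (n + 1) *
        (hypergeometricCoeff a b n * r ^ n / n !) := by
    rw [hypergeometricCoeff_succ ha hb, Nat.factorial_succ, pow_succ, Nat.cast_mul,
      Nat.cast_succ]
    field_simp
  set ρ := (∏ l, (a l + n)) / ∏ m, (b m + n)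
  have hρ : 0 ≤ ρ := div_nonneg (Finset.prod_nonneg fun l _ => by have := ha l; positivity)
    (Finset.prod_nonneg fun m _ => by have := hb m; positivity)
  have hρK : ρ ≤ K := prod_add_div_prod_add_le hcard (fun l => (ha l).le) (fun m => (hb m).le) hn1
  rw [hstep, norm_mul]
  gcongr
  rw [Real.norm_eq_abs, abs_div, abs_mul, abs_of_nonneg hρ,
    abs_of_pos (n.cast_add_one_pos : (0 : ℝ) < n + 1), div_le_iff₀ (by positivity)]
  nlinarith [mul_le_mul_of_nonneg_right hρK (abs_nonneg r)]

end Hypergeometric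

theorem hypergeometric_generating_function_general
    (p q : ℕ) (hpq : p ≤ q)
    (a1 : ℝ) (ha1 : 0 < a1)
    (a : Fin (p - 1) → ℝ) (b : Fin (q - 1) → ℝ)
    (ha : ∀ l, 0 < a l) (hb : ∀ m, 0 < b m)
    (z : ℂ) (t : ℝ) (ht : |t| < 1) :
    ∑' k : ℕ, (Real.Gamma (a1 + k) : ℂ) *
      (∑' n : ℕ, ((((Real.Gamma (a1 + k + n) / Real.Gamma (a1 + k)) *
            ∏ l, Real.Gamma (a l + n) / Real.Gamma (a l)) /
          ((Real.Gamma (a1 + n) / Real.Gamma a1) *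
            ∏ m, Real.Gamma (b m + n) / Real.Gamma (b m)) : ℝ) : ℂ) *
        z ^ n / (n.factorial : ℂ)) *
      ((t ^ k / k.factorial : ℝ) : ℂ)
    = (Real.Gamma a1 : ℂ) * (((1 - t) ^ (-a1) : ℝ) : ℂ) *
      ∑' n : ℕ, (((∏ l, Real.Gamma (a l + n) / Real.Gamma (a l)) /
          (∏ m, Real.Gamma (b m + n) / Real.Gamma (b m)) : ℝ) : ℂ) *
        (z / ((1 - t : ℝ) : ℂ)) ^ n / (n.factorial : ℂ) := by
  have hcard : Fintype.card (Fin (p - 1)) ≤ Fintype.card (Fin (q - 1)) := by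
    simpa using Nat.sub_le_sub_right hpq 1
  have hA : Summable fun n : ℕ =>
      ‖(hypergeometricCoeff a b n : ℂ)‖ * (‖z‖ / (1 - |t|)) ^ n / n ! := by
    simpa only [Complex.norm_real, Real.norm_of_nonneg (hypergeometricCoeff_pos ha hb _).le] using
      summable_hypergeometricCoeff_mul_pow_div_factorial hcard ha hb (‖z‖ / (1 - |t|))
  simp_rw [mul_div_mul_comm _ (∏ l, Real.Gamma (a l + _) / Real.Gamma (a l)), Complex.ofReal_mul]
  exact tsum_Gamma_add_mul_tsum_pochhammer_div_pochhammer ha1 ht _ z hA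

/-- `∑_k Γ(a₁+k) pFq(a₁+k,a₂,…,a_p; a₁,b₂,…,b_q; z) t^k/k!
  = Γ(a₁)(1-t)^{-a₁} (p-1)F(q-1)(a₂,…,a_p; b₂,…,b_q; z/(1-t))`,
where `(τ)_n = Γ(τ+n)/Γ(τ)` and `pFq` is the generalized hypergeometric series. -/
theorem hypergeometric_generating_function
    (p q : ℕ) (hp : 1 ≤ p) (hq : 1 ≤ q) (hpq : p ≤ q)
    (a1 : ℝ) (ha1 : 0 < a1)
    (a : Fin (p - 1) → ℝ) (b : Fin (q - 1) → ℝ)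
    (ha : ∀ l, 0 < a l) (hb : ∀ m, 0 < b m)
    (z : ℂ) (t : ℝ) (ht : |t| < 1) :
    ∑' k : ℕ, (Real.Gamma (a1 + k) : ℂ) *
      (∑' n : ℕ, ((((Real.Gamma (a1 + k + n) / Real.Gamma (a1 + k)) *
            ∏ l, Real.Gamma (a l + n) / Real.Gamma (a l)) /
          ((Real.Gamma (a1 + n) / Real.Gamma a1) *
            ∏ m, Real.Gamma (b m + n) / Real.Gamma (b m)) : ℝ) : ℂ) *
        z ^ n / (n.factorial : ℂ)) *
      ((t ^ k / k.factorial : ℝ) : ℂ)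
    = (Real.Gamma a1 : ℂ) * (((1 - t) ^ (-a1) : ℝ) : ℂ) *
      ∑' n : ℕ, (((∏ l, Real.Gamma (a l + n) / Real.Gamma (a l)) /
          (∏ m, Real.Gamma (b m + n) / Real.Gamma (b m)) : ℝ) : ℂ) *
        (z / ((1 - t : ℝ) : ℂ)) ^ n / (n.factorial : ℂ) :=
  hypergeometric_generating_function_general p q hpq a1 ha1 a b ha hb z t ht
end

section
/- Let μ > 1 and r > 0. Then for every real t with |t| < 1, ∑_{k=0}^∞ Γ(μ+k) · (t^k/k!) · ∑_{n=1}^∞ 2 n^k / (r² + n)^{μ+k} = [2 Γ(μ) / (1−t)^μ] · ζ(μ, 1 + r²/(1−t)), where ζ(s,a) = ∑_{m=0}^∞ 1/(m+a)^s is the Hurwitz zeta function. -/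
/-!
For fixed `n`, the series in `k` is a binomial series: with `y = t (n+1) / (r² + n + 1)`,
`∑ Γ(μ+k)/k! yᵏ = Γ(μ) (1-y)^(-μ)`, so it sums to
`2Γ(μ) / (r² + (1-t)(n+1))^μ = 2Γ(μ) (1-t)^(-μ) (n + 1 + r²/(1-t))^(-μ)`.
The same computation with `|t|` in place of `t` bounds the absolute values of the double series
by a convergent Hurwitz series, which justifies swapping the two sums.
-/

open Real Polynomial
open scoped Nat

theorem Real.Gamma_add_nat_eq_mul_ascPochhammer {μ : ℝ} (hμ : 0 < μ) (k : ℕ) :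
    Gamma (μ + k) = Gamma μ * (ascPochhammer ℝ k).eval μ := by
  induction k with
  | zero => simp
  | succ k ih =>
    rw [ascPochhammer_succ_eval, Nat.cast_succ, ← add_assoc, Gamma_add_one (by positivity), ih]
    ring

theorem Ring.choose_add_sub_one_eq_ascPochhammer_div_factorial (a : ℝ) (k : ℕ) :
    Ring.choose (a + k - 1) k = (ascPochhammer ℝ k).eval a / k ! := by
  rw [Ring.choose_eq_smul, descPochhammer_smeval_eq_ascPochhammer, ascPochhammer_smeval_eq_eval,
    smul_eq_mul, show a + k - 1 - k + 1 = a by ring, inv_mul_eq_div]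

theorem Real.hasSum_Gamma_div_factorial_mul_pow {μ y : ℝ} (hμ : 0 < μ) (hy : |y| < 1) :
    HasSum (fun k : ℕ ↦ Gamma (μ + k) / k ! * y ^ k) (Gamma μ / (1 - y) ^ μ) := by
  have hball : y ∈ Metric.eball (0 : ℝ) 1 := by
    rwa [Metric.mem_eball, edist_zero_right, enorm_eq_nnnorm, ENNReal.coe_lt_one_iff,
      ← NNReal.coe_lt_one, coe_nnnorm, Real.norm_eq_abs]
  have h := ((one_div_one_sub_rpow_hasFPowerSeriesOnBall_zero μ).hasSum hball).mul_left (Gamma μ)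
  simp only [FormalMultilinearSeries.ofScalars_apply_eq,
    Ring.choose_add_sub_one_eq_ascPochhammer_div_factorial, smul_eq_mul, zero_add] at h
  have hcoeff (k : ℕ) : Gamma (μ + k) / k ! * y ^ k
      = Gamma μ * ((ascPochhammer ℝ k).eval μ / k ! * y ^ k) := by
    rw [Gamma_add_nat_eq_mul_ascPochhammer hμ]
    ring
  simp only [hcoeff]
  rwa [div_eq_mul_one_div]

theorem Real.hasSum_Gamma_mul_pow_div_rpow {μ c t x : ℝ} (hμ : 0 < μ) (hc : 0 < c)
    (htx : |t * x| < c) :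
    HasSum (fun k : ℕ ↦ Gamma (μ + k) * (t ^ k / k !) * (x ^ k / c ^ (μ + k)))
      (Gamma μ / (c - t * x) ^ μ) := by
  have hy : |t * x / c| < 1 := by rwa [abs_div, abs_of_pos hc, div_lt_one hc]
  have h := (hasSum_Gamma_div_factorial_mul_pow hμ hy).div_const (c ^ μ)
  have hterm (k : ℕ) : Gamma (μ + k) / k ! * (t * x / c) ^ k / c ^ μ
      = Gamma (μ + k) * (t ^ k / k !) * (x ^ k / c ^ (μ + k)) := by
    rw [rpow_add hc, rpow_natCast, div_pow, mul_pow]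
    field_simp
  have hsum : Gamma μ / (1 - t * x / c) ^ μ / c ^ μ = Gamma μ / (c - t * x) ^ μ := by
    have hcx : 0 ≤ 1 - t * x / c := by linarith [(abs_lt.mp hy).2]
    rw [div_div, ← mul_rpow hcx hc.le, sub_mul, div_mul_cancel₀ _ hc.ne', one_mul]
  simpa only [hterm, hsum] using h

theorem summable_one_div_nat_add_rpow_of_pos {a s : ℝ} (ha : 0 < a) (hs : 1 < s) :
    Summable (fun n : ℕ ↦ 1 / ((n : ℝ) + a) ^ s) := by
  refine ((Real.summable_one_div_nat_add_rpow a s).mpr hs).congr fun n ↦ ?_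
  rw [abs_of_pos (by positivity)]

noncomputable def mathieuTerm (μ r t : ℝ) (n k : ℕ) : ℝ :=
  Gamma (μ + k) * (t ^ k / k !) * (2 * ((n : ℝ) + 1) ^ k / (r ^ 2 + ((n : ℝ) + 1)) ^ (μ + k))

theorem abs_mathieuTerm {μ : ℝ} (hμ : 0 < μ) (r t : ℝ) (n k : ℕ) :
    |mathieuTerm μ r t n k| = mathieuTerm μ r |t| n k := by
  have hG : 0 < Gamma (μ + k) := Gamma_pos_of_pos (by positivity)
  have hc : 0 < (r ^ 2 + ((n : ℝ) + 1)) ^ (μ + k) := rpow_pos_of_pos (by positivity) _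
  simp only [mathieuTerm, abs_mul, abs_div, abs_pow, abs_of_pos hG, abs_of_pos hc, Nat.abs_cast,
    abs_two, abs_of_pos (by positivity : (0 : ℝ) < n + 1)]

theorem hasSum_mathieuTerm {μ t : ℝ} (hμ : 0 < μ) (r : ℝ) (ht : |t| < 1) (n : ℕ) :
    HasSum (mathieuTerm μ r t n)
      (2 * Gamma μ / (1 - t) ^ μ * (1 / ((n : ℝ) + (1 + r ^ 2 / (1 - t))) ^ μ)) := by
  have hx : (0 : ℝ) < n + 1 := by positivity
  have h1t : 0 < 1 - t := by linarith [(abs_lt.mp ht).2]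
  have htx : |t * (n + 1)| < r ^ 2 + (n + 1) := by
    rw [abs_mul, abs_of_pos hx]
    nlinarith [sq_nonneg r]
  have h := (hasSum_Gamma_mul_pow_div_rpow hμ (by positivity) htx).mul_left 2
  have hfactor : r ^ 2 + ((n : ℝ) + 1) - t * (n + 1) = (1 - t) * (n + (1 + r ^ 2 / (1 - t))) := by
    field_simp
    ring
  rw [hfactor, mul_rpow h1t.le (by positivity)] at h
  rw [mul_one_div, div_div, mul_div_assoc]
  exact h.congr_fun fun k ↦ by simp only [mathieuTerm]; ring

theorem summable_mathieuTerm {μ t : ℝ} (hμ : 1 < μ) (r : ℝ) (ht : |t| < 1) :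
    Summable (Function.uncurry (mathieuTerm μ r t)) := by
  have hμ0 : 0 < μ := by linarith
  have ht' : |(|t|)| < 1 := by rwa [abs_abs]
  refine Summable.of_abs ((summable_prod_of_nonneg fun _ ↦ abs_nonneg _).mpr ⟨fun n ↦ ?_, ?_⟩)
  · simpa only [Function.uncurry_apply_pair, abs_mathieuTerm hμ0]
      using (hasSum_mathieuTerm hμ0 r ht' n).summable
  · have h1t : 0 < 1 - |t| := by linarith
    simpa only [Function.uncurry_apply_pair, abs_mathieuTerm hμ0,
      (hasSum_mathieuTerm hμ0 r ht' _).tsum_eq]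
      using (summable_one_div_nat_add_rpow_of_pos (by positivity) hμ).mul_left _

theorem mathieu_generating_function_general
    (μ r : ℝ) (hμ : 1 < μ)
    (t : ℝ) (ht : |t| < 1) :
    ∑' k : ℕ, Real.Gamma (μ + k) * (t ^ k / k.factorial) *
      ∑' n : ℕ, 2 * ((n : ℝ) + 1) ^ k / (r ^ 2 + ((n : ℝ) + 1)) ^ (μ + k)
    = 2 * Real.Gamma μ / (1 - t) ^ μ *
      ∑' m : ℕ, 1 / ((m : ℝ) + (1 + r ^ 2 / (1 - t))) ^ μ := by
  have hμ0 : 0 < μ := by linarith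
  calc _ = ∑' k : ℕ, ∑' n : ℕ, mathieuTerm μ r t n k :=
        tsum_congr fun k ↦ tsum_mul_left.symm
    _ = ∑' n : ℕ, ∑' k : ℕ, mathieuTerm μ r t n k := (summable_mathieuTerm hμ r ht).tsum_comm
    _ = ∑' n : ℕ, 2 * Gamma μ / (1 - t) ^ μ * (1 / ((n : ℝ) + (1 + r ^ 2 / (1 - t))) ^ μ) :=
        tsum_congr fun n ↦ (hasSum_mathieuTerm hμ0 r ht n).tsum_eq
    _ = _ := tsum_mul_left

/-- Generating function for generalized Mathieu-type series:
`∑_k Γ(μ+k) (tᵏ/k!) ∑_{n≥1} 2nᵏ/(r²+n)^{μ+k} = 2Γ(μ)/(1-t)^μ · ζ(μ, 1+r²/(1-t))`,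
where `ζ(s,a) = ∑_{m≥0} 1/(m+a)^s` is the Hurwitz zeta function. -/
theorem mathieu_generating_function
    (μ r : ℝ) (hμ : 1 < μ) (hr : 0 < r)
    (t : ℝ) (ht : |t| < 1) :
    ∑' k : ℕ, Real.Gamma (μ + k) * (t ^ k / k.factorial) *
      ∑' n : ℕ, 2 * ((n : ℝ) + 1) ^ k / (r ^ 2 + ((n : ℝ) + 1)) ^ (μ + k)
    = 2 * Real.Gamma μ / (1 - t) ^ μ *
      ∑' m : ℕ, 1 / ((m : ℝ) + (1 + r ^ 2 / (1 - t))) ^ μ :=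
  mathieu_generating_function_general μ r hμ t ht
end
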